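/- Let s₁ and s₂ be related strings of length n and let T be any finite set of blocks of (s₁, s₂) such that any two distinct blocks in T do not overlap. Then the quantity n − Σ_{b∈T}(t_b − 1) is an upper bound on the minimum size of a common partition of s₁ and s₂, i.e., the minimum common partition size is at most n − Σ_{b∈T}(t_b − 1). -/

import Mathlib

/-- A common partition of strings `s₁` and `s₂`: a multiset of nonempty strings
(represented by the two orderings `P₁`, `P₂`, which are permutations of each other)
whose concatenations are `s₁` and `s₂` respectively. -/
def CommonPartition {α : Type*} (s₁ s₂ : List α) (P₁ P₂ : List (List α)) : Prop :=
  P₁.Perm P₂ ∧ (∀ p ∈ P₁, p ≠ []) ∧ P₁.flatten = s₁ ∧ P₂.flatten = s₂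

/-- A block of the pair of strings `(s₁, s₂)`: a triple `(k¹, k², t)` with `t ≥ 1`,
`k¹ + t ≤ |s₁|`, `k² + t ≤ |s₂|`, and the substring of `s₁` of length `t` starting at
`k¹` equals the substring of `s₂` of length `t` starting at `k²`. -/
def IsBlock {α : Type*} (s₁ s₂ : List α) (b : ℕ × ℕ × ℕ) : Prop :=
  1 ≤ b.2.2 ∧ b.1 + b.2.2 ≤ s₁.length ∧ b.2.1 + b.2.2 ≤ s₂.length ∧
    (s₁.drop b.1).take b.2.2 = (s₂.drop b.2.1).take b.2.2

/-- Blocks `bᵢ = (kᵢ¹, kᵢ², tᵢ)` and `b_j = (k_j¹, k_j², t_j)` overlap if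
`kᵢ¹ − t_j < k_j¹ < kᵢ¹ + tᵢ` or `kᵢ² − t_j < k_j² < kᵢ² + tᵢ` (over the integers). -/
def Overlap (bi bj : ℕ × ℕ × ℕ) : Prop :=
  ((bi.1 : ℤ) - bj.2.2 < bj.1 ∧ (bj.1 : ℤ) < bi.1 + bi.2.2) ∨
  ((bi.2.1 : ℤ) - bj.2.2 < bj.2.1 ∧ (bj.2.1 : ℤ) < bi.2.1 + bi.2.2)

/-!
Cut `s₁` into the substrings of the blocks of `T` and single letters elsewhere, and `s₂`
likewise. The block substrings of the two cuts coincide, so, as `s₁` and `s₂` have the same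
letters, so do the two sets of leftover single letters: the pieces of the two cuts are
permutations of each other. Their number is `|T| + (n - Σ t_b) = n - Σ (t_b - 1)`.
-/

namespace List
variable {α ι : Type*}

theorem flatten_map_singleton (s : List α) : (s.map fun a => [a]).flatten = s := by
  induction s <;> simp [*]

theorem take_drop_take_of_add_le {s : List α} {i j k : ℕ} (h : i + j ≤ k) :
    ((s.take k).drop i).take j = (s.drop i).take j := by
  rw [drop_take, take_take, min_eq_left (by omega)]

theorem exists_flatten_eq_of_pairwise_disjoint (s : List α) (S : Finset ι) (start len : ι → ℕ)
    (hpos : ∀ i ∈ S, 0 < len i) (hfit : ∀ i ∈ S, start i + len i ≤ s.length)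
    (hdisj : (S : Set ι).Pairwise
      fun i j => start i + len i ≤ start j ∨ start j + len j ≤ start i) :
    ∃ (P : List (List α)) (u : Multiset α), P.flatten = s ∧
      (P : Multiset (List α)) =
        S.val.map (fun i => (s.drop (start i)).take (len i)) + u.map fun a => [a] := by
  classical
  -- The interval starting last lies to the right of all the others: peel it off together with
  -- the suffix after it, and recurse on the prefix before it.
  induction S using Finset.induction_on_max_value start generalizing s with
  | empty => exact ⟨s.map fun a => [a], s, flatten_map_singleton s, by simp⟩
  | insert a S ha hmax ih =>
    have hS : ∀ i ∈ S, start i + len i ≤ start a := fun i hi => by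
      have := hdisj (by simp) (by simp [hi]) (ne_of_mem_of_not_mem hi ha).symm
      have := hpos a (by simp)
      have := hmax i hi
      omega
    have hk : start a + len a ≤ s.length := hfit a (by simp)
    obtain ⟨P, u, hP, hPu⟩ := ih (s.take (start a)) (fun i hi => hpos i (by simp [hi]))
      (fun i hi => by have := hS i hi; rw [length_take]; omega)
      (hdisj.mono (by simp))
    refine ⟨P ++ (s.drop (start a)).take (len a) :: (s.drop (start a + len a)).map (fun a => [a]),
      u + s.drop (start a + len a), ?_, ?_⟩
    · rw [flatten_append, flatten_cons, flatten_map_singleton, hP, ← drop_drop,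
        take_append_drop, take_append_drop]
    · rw [Multiset.map_congr rfl fun i hi => take_drop_take_of_add_le (hS i hi)] at hPu
      rw [Finset.insert_val_of_notMem ha, Multiset.map_cons, ← Multiset.coe_add, hPu,
        ← Multiset.cons_coe, Multiset.map_add, Multiset.map_coe]
      simp only [← Multiset.singleton_add]
      abel

section
variable {P : List (List α)} {s : List α} {M : Multiset (List α)} {u : Multiset α}

theorem coe_eq_join_add_of_flatten_eq (hP : P.flatten = s)
    (hPM : (P : Multiset (List α)) = M + u.map fun a => [a]) :
    (s : Multiset α) = (M.map (↑)).join + u := by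
  rw [← hP, ← Multiset.coe_join, ← Multiset.map_coe, hPM, Multiset.map_add, Multiset.join_add,
    Multiset.map_map]
  exact congrArg _ ((Multiset.bind_singleton u id).trans (Multiset.map_id u))

theorem ne_nil_of_coe_eq_add (hPM : (P : Multiset (List α)) = M + u.map fun a => [a])
    (hM : ∀ p ∈ M, p ≠ []) : ∀ p ∈ P, p ≠ [] := by
  intro p hp
  rw [← Multiset.mem_coe, hPM, Multiset.mem_add, Multiset.mem_map] at hp
  rcases hp with hp | ⟨a, -, rfl⟩
  · exact hM p hp
  · exact cons_ne_nil a []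

theorem length_add_sum_eq_of_flatten_eq (hP : P.flatten = s)
    (hPM : (P : Multiset (List α)) = M + u.map fun a => [a]) (hM : ∀ p ∈ M, p ≠ []) :
    P.length + (M.map fun p => p.length - 1).sum = s.length := by
  have hcardP : P.length = M.card + u.card := by
    rw [← Multiset.coe_card, hPM, Multiset.card_add, Multiset.card_map]
  have hcards : s.length = (M.map length).sum + u.card := by
    rw [← Multiset.coe_card, coe_eq_join_add_of_flatten_eq hP hPM, Multiset.card_add,
      Multiset.card_join, Multiset.map_map]
    rfl
  have hsum : (M.map fun p => p.length - 1).sum + M.card = (M.map length).sum := by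
    calc _ = (M.map fun p => p.length - 1 + 1).sum := by simp [Multiset.sum_map_add]
      _ = _ := congrArg _ <| Multiset.map_congr rfl fun p hp =>
        Nat.sub_add_cancel (length_pos_of_ne_nil (hM p hp))
  omega

end

end List

theorem IsBlock.length_take_drop {α : Type*} {s₁ s₂ : List α} {b : ℕ × ℕ × ℕ}
    (hb : IsBlock s₁ s₂ b) : ((s₁.drop b.1).take b.2.2).length = b.2.2 := by
  have := hb.2.1
  simp only [List.length_take, List.length_drop]
  omega

theorem not_overlap_iff {b b' : ℕ × ℕ × ℕ} :
    ¬ Overlap b b' ↔ (b.1 + b.2.2 ≤ b'.1 ∨ b'.1 + b'.2.2 ≤ b.1) ∧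
      (b.2.1 + b.2.2 ≤ b'.2.1 ∨ b'.2.1 + b'.2.2 ≤ b.2.1) := by
  unfold Overlap
  omega

open List in
theorem min_commonPartition_le_general {α : Type*} (s₁ s₂ : List α) (n : ℕ)
    (h₁ : s₁.length = n) (hrel : s₁.Perm s₂)
    (T : Finset (ℕ × ℕ × ℕ)) (hT : ∀ b ∈ T, IsBlock s₁ s₂ b)
    (hno : ∀ b ∈ T, ∀ b' ∈ T, b ≠ b' → ¬ Overlap b b') :
    sInf {m : ℕ | ∃ P₁ P₂ : List (List α),
        CommonPartition s₁ s₂ P₁ P₂ ∧ P₁.length = m} ≤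
      n - ∑ b ∈ T, (b.2.2 - 1) := by
  obtain ⟨P₁, u₁, hP₁, hPu₁⟩ := exists_flatten_eq_of_pairwise_disjoint s₁ T Prod.fst (·.2.2)
    (fun b hb => (hT b hb).1) (fun b hb => (hT b hb).2.1)
    (fun b hb b' hb' hne => (not_overlap_iff.1 (hno b hb b' hb' hne)).1)
  obtain ⟨P₂, u₂, hP₂, hPu₂⟩ := exists_flatten_eq_of_pairwise_disjoint s₂ T (·.2.1) (·.2.2)
    (fun b hb => (hT b hb).1) (fun b hb => (hT b hb).2.2.1)
    (fun b hb b' hb' hne => (not_overlap_iff.1 (hno b hb b' hb' hne)).2)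
  rw [Multiset.map_congr rfl fun b hb => ((hT b hb).2.2.2).symm] at hPu₂
  have hu : u₁ = u₂ := add_left_cancel <| (coe_eq_join_add_of_flatten_eq hP₁ hPu₁).symm.trans <|
    (Multiset.coe_eq_coe.2 hrel).trans (coe_eq_join_add_of_flatten_eq hP₂ hPu₂)
  have hne : ∀ p ∈ T.val.map fun b => (s₁.drop b.1).take b.2.2, p ≠ [] := by
    simp only [Multiset.mem_map, Finset.mem_val]
    rintro _ ⟨b, hb, rfl⟩
    exact ne_nil_of_length_pos ((hT b hb).length_take_drop.symm ▸ (hT b hb).1)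
  have hsum : ((T.val.map fun b => (s₁.drop b.1).take b.2.2).map fun p => p.length - 1).sum =
      ∑ b ∈ T, (b.2.2 - 1) := by
    rw [Multiset.map_map, Finset.sum_eq_multiset_sum]
    exact congrArg _ <| Multiset.map_congr rfl fun b hb =>
      congrArg (· - 1) (hT b hb).length_take_drop
  have hlen := length_add_sum_eq_of_flatten_eq hP₁ hPu₁ hne
  refine Nat.sInf_le ⟨P₁, P₂, ⟨?_, ne_nil_of_coe_eq_add hPu₁ hne, hP₁, hP₂⟩, by omega⟩
  rw [← Multiset.coe_eq_coe, hPu₁, hPu₂, hu]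

/-- For related strings of length `n` and any set `T` of pairwise non-overlapping
blocks, the minimum size of a common partition is at most `n − Σ_{b∈T} (t_b − 1)`. -/
theorem min_commonPartition_le {α : Type*} (s₁ s₂ : List α) (n : ℕ)
    (h₁ : s₁.length = n) (h₂ : s₂.length = n) (hrel : s₁.Perm s₂)
    (T : Finset (ℕ × ℕ × ℕ)) (hT : ∀ b ∈ T, IsBlock s₁ s₂ b)
    (hno : ∀ b ∈ T, ∀ b' ∈ T, b ≠ b' → ¬ Overlap b b') :
    sInf {m : ℕ | ∃ P₁ P₂ : List (List α),
        CommonPartition s₁ s₂ P₁ P₂ ∧ P₁.length = m} ≤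
      n - ∑ b ∈ T, (b.2.2 - 1) :=
  min_commonPartition_le_general s₁ s₂ n h₁ hrel T hT hno
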